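/- Let n ≥ 1, let 𝕊_n be the symmetric group on n letters and S ⊆ 𝕊_n an inverse-closed subset. Let (π^α)_{α∈A} be a finite family of pairwise non-unitarily-equivalent irreducible unitary representations of 𝕊_n, of dimensions d_α, such that every irreducible unitary representation of 𝕊_n is unitarily equivalent to some π^α. For each α ∈ A, each 1 ≤ i ≤ d_α, and each eigenvalue λ of π^α(S), let F^{α,λ}_i be a finite family of vectors in E_λ(π^α(S)) which is a frame for E_λ(π^α(S)). Then the collection Φ = {Θ̃_{π^α,i,λ}(ψ) : α ∈ A, 1 ≤ i ≤ d_α, λ an eigenvalue of π^α(S), ψ ∈ F^{α,λ}_i} is a frame for L²(𝕊_n), and every element of Φ belongs to Z_{π^α,i,λ} for some α, i and eigenvalue λ of π^α(S). -/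

import Mathlib

open scoped BigOperators

noncomputable section

/-- A unitary representation of a group `G` of dimension `d`: a group homomorphism from `G`
into the group of `d × d` complex unitary matrices. -/
abbrev URep (G : Type*) [Group G] (d : ℕ) : Type _ :=
  G →* Matrix.unitaryGroup (Fin d) ℂ

/-- A unitary representation is irreducible if its dimension is positive and the only
subspaces `W ⊆ ℂ^d` with `π(g)W ⊆ W` for all `g` are `{0}` and `ℂ^d`. -/
def URepIrreducible {G : Type*} [Group G] {d : ℕ} (π : URep G d) : Prop :=
  0 < d ∧ ∀ W : Submodule ℂ (Fin d → ℂ),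
    (∀ g : G, ∀ ξ ∈ W, ((π g : Matrix (Fin d) (Fin d) ℂ)).mulVec ξ ∈ W) → W = ⊥ ∨ W = ⊤

/-- The coefficient function `π_{j,i}(g) = (π(g))_{i,j}`. -/
def coeff {G : Type*} [Group G] {d : ℕ} (π : URep G d) (j i : Fin d) : G → ℂ :=
  fun g => (π g : Matrix (Fin d) (Fin d) ℂ) i j

/-- The subspace `E_{π,i} = span{π_{j,i} : 1 ≤ j ≤ d}` of `L²(G)`. -/
def Esp {G : Type*} [Group G] {d : ℕ} (π : URep G d) (i : Fin d) : Submodule ℂ (G → ℂ) :=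
  Submodule.span ℂ (Set.range fun j : Fin d => coeff π j i)

/-- Unitary equivalence of two unitary representations: the dimensions agree and there is a
unitary matrix `U` with `U⁻¹ π(g) U = σ(g)` for all `g`. -/
def UEquiv {G : Type*} [Group G] {d d' : ℕ} (π : URep G d) (σ : URep G d') : Prop :=
  ∃ h : d = d', ∃ U : Matrix (Fin d') (Fin d') ℂ, U ∈ Matrix.unitaryGroup (Fin d') ℂ ∧
    ∀ g : G, U⁻¹ * (Matrix.reindex (finCongr h) (finCongr h)
        ((π g : Matrix (Fin d) (Fin d) ℂ))) * U = (σ g : Matrix (Fin d') (Fin d') ℂ)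

/-- `π(S) = ∑_{a ∈ S} π(a)`. -/
def repSum {G : Type*} [Group G] {d : ℕ} (π : URep G d) (S : Finset G) :
    Matrix (Fin d) (Fin d) ℂ :=
  ∑ a ∈ S, (π a : Matrix (Fin d) (Fin d) ℂ)

/-- `X` is a `λ`-eigenvector (possibly zero) of `M`: `M X = λ X`. -/
def IsEigvec {d : ℕ} (M : Matrix (Fin d) (Fin d) ℂ) (lam : ℝ) (X : Fin d → ℂ) : Prop :=
  M.mulVec X = (lam : ℂ) • X

/-- `λ` is an eigenvalue of `M`. -/
def IsEigval {d : ℕ} (M : Matrix (Fin d) (Fin d) ℂ) (lam : ℝ) : Prop :=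
  ∃ X : Fin d → ℂ, X ≠ 0 ∧ IsEigvec M lam X

/-- The `λ`-eigenspace `E_λ(M)` as a submodule of `ℂ^d`. -/
def eigSp {d : ℕ} (M : Matrix (Fin d) (Fin d) ℂ) (lam : ℝ) : Submodule ℂ (Fin d → ℂ) :=
  LinearMap.ker (M.mulVecLin - (lam : ℂ) • LinearMap.id)

/-- The inner product `⟨u, v⟩ = ∑ u(x) conj(v(x))`, linear in the first variable
(the convention of the paper). -/
def dotC {X : Type*} [Fintype X] (u v : X → ℂ) : ℂ :=
  ∑ x, u x * (starRingEnd ℂ) (v x)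

/-- The squared norm `‖u‖² = ∑ |u(x)|²`. -/
def norm2 {X : Type*} [Fintype X] (u : X → ℂ) : ℝ :=
  ∑ x, Complex.normSq (u x)

/-- The map `Θ_{π,i} : X ↦ ∑_k X_k π_{k,i}`. -/
def Theta {G : Type*} [Group G] {d : ℕ} (π : URep G d) (i : Fin d)
    (X : Fin d → ℂ) : G → ℂ :=
  fun g => ∑ k, X k * coeff π k i g

/-- The map `Θ_{π,i}` as a linear map. -/
def ThetaL {G : Type*} [Group G] {d : ℕ} (π : URep G d) (i : Fin d) :
    (Fin d → ℂ) →ₗ[ℂ] (G → ℂ) where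
  toFun X := fun g => ∑ k, X k * coeff π k i g
  map_add' X Y := by
    funext g
    simp [add_mul, Finset.sum_add_distrib]
  map_smul' c X := by
    funext g
    simp [Finset.mul_sum, mul_assoc]

/-- The space `Z_{π,i,λ} = {∑_k X_k π_{k,i} : X ∈ E_λ(π(S))}`. -/
def Zset {G : Type*} [Group G] {d : ℕ} (π : URep G d) (i : Fin d) (lam : ℝ) (S : Finset G) :
    Set (G → ℂ) :=
  {f | ∃ X : Fin d → ℂ, IsEigvec (repSum π S) lam X ∧ f = Theta π i X}

/-- The normalized map `Θ̃_{π,i} = √(d/n!) Θ_{π,i}` for the symmetric group `𝕊_n`. -/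
def ThetaT (n : ℕ) {d : ℕ} (π : URep (Equiv.Perm (Fin n)) d) (i : Fin d)
    (X : Fin d → ℂ) : Equiv.Perm (Fin n) → ℂ :=
  fun g => (Real.sqrt (d / n.factorial) : ℂ) * Theta π i X g

/-- `ψ` is a frame for `W` with lower bound `A` and upper bound `B`:
`A‖v‖² ≤ ∑_t |⟨v, ψ_t⟩|² ≤ B‖v‖²` for all `v ∈ W`. -/
def IsFrameOn {X ι : Type*} [Fintype X] [Fintype ι] (ψ : ι → (X → ℂ)) (W : Set (X → ℂ))
    (A B : ℝ) : Prop :=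
  0 < A ∧ A ≤ B ∧ (∀ t, ψ t ∈ W) ∧
    ∀ v ∈ W, A * norm2 v ≤ ∑ t, Complex.normSq (dotC v (ψ t)) ∧
      ∑ t, Complex.normSq (dotC v (ψ t)) ≤ B * norm2 v

/-- `ψ` is a frame for `W` (for some frame bounds `0 < A ≤ B`). -/
def IsFrameIn {X ι : Type*} [Fintype X] [Fintype ι] (ψ : ι → (X → ℂ)) (W : Set (X → ℂ)) :
    Prop :=
  ∃ A B : ℝ, IsFrameOn ψ W A B



/-! In finite dimension a finite family is a frame exactly when it spans, so it suffices to show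
that `Φ` spans `L²(G)`.

The coefficient functions of a complete family of irreducible unitary representations span
`L²(G)`. Otherwise the orthogonal complement of their span `C` is a nonzero subspace invariant
under right translations, and a minimal invariant subspace `V` of it carries an irreducible
unitary representation `σ` (its matrix in an orthonormal basis). Every `f ∈ V` is the coefficient
`g ↦ ⟪δ₁, f(· g)⟫` of the right regular representation, hence a combination of coefficients of
`σ`; since `σ` is equivalent to some `π^α`, these lie in `C`, so `V ⊆ C ∩ Cᗮ = 0`.

Each coefficient `π_{j,i}` is `Θ_{π,i}(e_j)`. As `S` is inverse-closed, `π(S)` is Hermitian, so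
`e_j` is a combination of eigenvectors; each eigenspace is spanned by its frame, and `Θ̃` is a
nonzero multiple of `Θ`. -/

open Set

section Frames

variable {X : Type*} [Fintype X]

theorem dotC_eq_inner (u v : X → ℂ) :
    dotC u v = inner ℂ (WithLp.toLp 2 v) (WithLp.toLp 2 u) := by
  simp [dotC, PiLp.inner_apply]

theorem norm2_eq_norm_sq (u : X → ℂ) : norm2 u = ‖WithLp.toLp 2 u‖ ^ 2 := by
  simp [norm2, EuclideanSpace.norm_sq_eq, Complex.normSq_eq_norm_sq]

theorem span_range_eq_of_isFrameIn {ι : Type*} [Fintype ι] {ψ : ι → X → ℂ}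
    {W : Submodule ℂ (X → ℂ)} (hψ : IsFrameIn ψ W) : Submodule.span ℂ (range ψ) = W := by
  obtain ⟨A, B, hA, -, hmem, hbound⟩ := hψ
  let ofLp := (WithLp.linearEquiv 2 ℂ (X → ℂ)).toLinearMap
  let K := (Submodule.span ℂ (range ψ)).comap ofLp
  have hKW : K ≤ W.comap ofLp :=
    Submodule.comap_mono (Submodule.span_le.2 (range_subset_iff.2 hmem))
  have hperp : Kᗮ ⊓ W.comap ofLp = ⊥ := by
    refine eq_bot_iff.2 fun w ⟨hwK, hwW⟩ => ?_
    have hzero : ∑ t, Complex.normSq (dotC (ofLp w) (ψ t)) = 0 :=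
      Finset.sum_eq_zero fun t _ => by
        rw [dotC_eq_inner, Complex.normSq_eq_zero]
        have hψK : WithLp.toLp 2 (ψ t) ∈ K := Submodule.subset_span (mem_range_self t)
        exact Submodule.inner_right_of_mem_orthogonal hψK hwK
    have hlow := (hbound _ hwW).1
    rw [hzero, norm2_eq_norm_sq] at hlow
    change A * ‖w‖ ^ 2 ≤ 0 at hlow
    rw [Submodule.mem_bot, ← norm_eq_zero, ← sq_eq_zero_iff]
    exact le_antisymm (le_of_mul_le_mul_left (by simpa using hlow) hA) (by positivity)
  have hK := Submodule.sup_orthogonal_inf_of_hasOrthogonalProjection hKW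
  rw [hperp, sup_bot_eq] at hK
  exact Submodule.comap_injective_of_surjective (WithLp.linearEquiv 2 ℂ (X → ℂ)).surjective hK

theorem isFrameIn_univ_of_span_eq_top {ι : Type*} [Fintype ι] {ψ : ι → X → ℂ}
    (hψ : Submodule.span ℂ (range ψ) = ⊤) : IsFrameIn ψ univ := by
  let analysis : EuclideanSpace ℂ X →ₗ[ℂ] EuclideanSpace ℂ ι :=
    (WithLp.linearEquiv 2 ℂ (ι → ℂ)).symm.toLinearMap ∘ₗ
      LinearMap.pi fun t => innerₛₗ ℂ (WithLp.toLp 2 (ψ t))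
  have hsum (v : X → ℂ) :
      ∑ t, Complex.normSq (dotC v (ψ t)) = ‖analysis (WithLp.toLp 2 v)‖ ^ 2 := by
    simp [analysis, EuclideanSpace.norm_sq_eq, Complex.normSq_eq_norm_sq, dotC_eq_inner]
  have hspan : Submodule.span ℂ (range fun t => WithLp.toLp 2 (ψ t)) = ⊤ := by
    have := congrArg (Submodule.map (WithLp.linearEquiv 2 ℂ (X → ℂ)).symm.toLinearMap) hψ
    rwa [Submodule.map_span, ← range_comp, Submodule.map_top, LinearEquiv.range] at this
  have hinj : Function.Injective analysis := by
    rw [← LinearMap.ker_eq_bot, eq_bot_iff]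
    intro v hv
    have hortho : Submodule.span ℂ (range fun t => WithLp.toLp 2 (ψ t)) ⟂ ℂ ∙ v := by
      rw [Submodule.isOrtho_span]
      rintro _ ⟨t, rfl⟩ w hw
      rw [mem_singleton_iff.1 hw]
      exact congrFun (congrArg WithLp.ofLp hv) t
    rw [hspan, Submodule.isOrtho_top_left, Submodule.span_singleton_eq_bot] at hortho
    simp [hortho]
  obtain ⟨c, hc, hlow⟩ := antilipschitzWith_iff_exists_mul_le_norm.1
    (((LinearMap.injective_iff_antilipschitz analysis).1 hinj).imp fun _ h => h.2)
  refine ⟨c ^ 2, c ^ 2 + ∑ t, ‖WithLp.toLp 2 (ψ t)‖ ^ 2, by positivity,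
    le_add_of_nonneg_right (by positivity), fun _ => trivial, fun v _ => ⟨?_, ?_⟩⟩
  · rw [hsum, norm2_eq_norm_sq, ← mul_pow]
    exact pow_le_pow_left₀ (by positivity) (hlow _) 2
  · rw [norm2_eq_norm_sq, add_mul, Finset.sum_mul]
    refine le_add_of_nonneg_of_le (by positivity) (Finset.sum_le_sum fun t _ => ?_)
    rw [dotC_eq_inner, Complex.normSq_eq_norm_sq, ← mul_pow]
    exact pow_le_pow_left₀ (norm_nonneg _) (norm_inner_le_norm _ _) 2

end Frames

section Eigenvectors

theorem repSum_isHermitian {G : Type*} [Group G] {d : ℕ} (π : URep G d) {S : Finset G}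
    (hS : ∀ s ∈ S, s⁻¹ ∈ S) : (repSum π S).IsHermitian := by
  rw [Matrix.IsHermitian, repSum, Matrix.conjTranspose_sum]
  refine Finset.sum_nbij' (·⁻¹) (·⁻¹) hS hS (fun a _ => inv_inv a) (fun a _ => inv_inv a)
    fun a _ => ?_
  rw [map_inv, ← Unitary.star_eq_inv]
  rfl

variable {d : ℕ} {M : Matrix (Fin d) (Fin d) ℂ}

theorem IsEigvec.smul {lam : ℝ} {X : Fin d → ℂ} (hX : IsEigvec M lam X) (c : ℂ) :
    IsEigvec M lam (c • X) := by
  rw [IsEigvec, Matrix.mulVec_smul, hX, smul_comm]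

theorem coe_eigSp (lam : ℝ) : (eigSp M lam : Set (Fin d → ℂ)) = {X | IsEigvec M lam X} := by
  ext X
  simp [eigSp, IsEigvec, sub_eq_zero]

theorem iSup_eigSp_eq_top (hM : M.IsHermitian) :
    ⨆ (lam : ℝ) (_ : IsEigval M lam), eigSp M lam = ⊤ := by
  let b := hM.eigenvectorBasis
  rw [eq_top_iff, ← (b.toBasis.map (WithLp.linearEquiv 2 ℂ (Fin d → ℂ))).span_eq,
    Submodule.span_le]
  rintro _ ⟨j, rfl⟩
  have hj : IsEigvec M (hM.eigenvalues j) (b j).ofLp := by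
    rw [IsEigvec, hM.mulVec_eigenvectorBasis j]
    exact RCLike.real_smul_eq_coe_smul (K := ℂ) _ _
  have hne : (b j).ofLp ≠ 0 := by
    simpa using b.orthonormal.ne_zero j
  have hmem : (b j).ofLp ∈ eigSp M (hM.eigenvalues j) := by
    rw [← SetLike.mem_coe, coe_eigSp]
    exact hj
  exact Submodule.mem_iSup_of_mem _ (Submodule.mem_iSup_of_mem ⟨_, hne, hj⟩ (by simpa using hmem))

theorem span_frames_eq_top (hM : M.IsHermitian) {Λ : Set ℝ}
    (hΛ : ∀ lam, IsEigval M lam → lam ∈ Λ) {κ : ℝ → Type*} [∀ lam, Fintype (κ lam)]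
    {F : (lam : ℝ) → κ lam → Fin d → ℂ}
    (hF : ∀ lam ∈ Λ, IsFrameIn (F lam) {X | IsEigvec M lam X}) :
    Submodule.span ℂ (⋃ lam ∈ Λ, range (F lam)) = ⊤ := by
  rw [eq_top_iff, ← iSup_eigSp_eq_top hM]
  refine iSup₂_le fun lam hlam => ?_
  have hframe := hF lam (hΛ lam hlam)
  rw [← coe_eigSp] at hframe
  rw [← span_range_eq_of_isFrameIn hframe]
  exact Submodule.span_mono (subset_biUnion_of_mem (u := fun lam => range (F lam)) (hΛ lam hlam))

end Eigenvectors

section Theta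

variable {G : Type*} [Group G] {d : ℕ} (π : URep G d)

theorem Theta_smul (i : Fin d) (c : ℂ) (X : Fin d → ℂ) : Theta π i (c • X) = c • Theta π i X :=
  map_smul (ThetaL π i) c X

theorem Theta_single (p q : Fin d) : Theta π q (Pi.single p 1) = coeff π p q := by
  funext g
  simp [Theta, Pi.single_apply]

theorem coeff_mem_of_Theta_mem (q : Fin d) {s : Set (Fin d → ℂ)}
    (hs : Submodule.span ℂ s = ⊤) {K : Submodule ℂ (G → ℂ)} (hK : ∀ X ∈ s, Theta π q X ∈ K)
    (p : Fin d) : coeff π p q ∈ K := by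
  have hle : Submodule.span ℂ s ≤ K.comap (ThetaL π q) := Submodule.span_le.2 hK
  rw [← Theta_single]
  exact hle (hs ▸ Submodule.mem_top)

end Theta

section InvariantSubspace

variable {G E : Type*} [Group G] [NormedAddCommGroup E] [InnerProductSpace ℂ E]
  (ρ : G →* (E ≃ₗᵢ[ℂ] E))

def IsInvariantSubspace (V : Submodule ℂ E) : Prop := ∀ g, ∀ v ∈ V, ρ g v ∈ V

variable {ρ}

theorem map_inv_apply_map_apply (g : G) (v : E) : ρ g⁻¹ (ρ g v) = v := by
  change (ρ g⁻¹ * ρ g) v = v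
  rw [← map_mul, inv_mul_cancel, map_one]
  rfl

theorem IsInvariantSubspace.orthogonal {V : Submodule ℂ E} (hV : IsInvariantSubspace ρ V) :
    IsInvariantSubspace ρ Vᗮ := by
  intro g w hw v hv
  rw [← (ρ g⁻¹).inner_map_map, map_inv_apply_map_apply]
  exact hw _ (hV g⁻¹ v hv)

variable {V : Submodule ℂ E} {d : ℕ} (b : OrthonormalBasis (Fin d) ℂ V)

theorem OrthonormalBasis.sum_inner_smul_coe {v : E} (hv : v ∈ V) :
    ∑ k, inner ℂ (b k : E) v • (b k : E) = v := by
  simpa using congrArg Subtype.val (b.sum_repr' ⟨v, hv⟩)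

variable (ρ)

def repMatrix (g : G) : Matrix (Fin d) (Fin d) ℂ :=
  fun k j => inner ℂ (b k : E) (ρ g (b j))

variable {ρ}

theorem map_basis_eq_sum_repMatrix (hV : IsInvariantSubspace ρ V) (g : G) (j : Fin d) :
    ρ g (b j) = ∑ k, repMatrix ρ b g k j • (b k : E) :=
  (b.sum_inner_smul_coe (hV g _ (b j).2)).symm

theorem repMatrix_one : repMatrix ρ b 1 = 1 := by
  ext k j
  simp [repMatrix, ← Submodule.coe_inner, b.inner_eq_ite, Matrix.one_apply]

theorem repMatrix_mul (hV : IsInvariantSubspace ρ V) (g h : G) :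
    repMatrix ρ b (g * h) = repMatrix ρ b g * repMatrix ρ b h := by
  ext k j
  rw [Matrix.mul_apply, repMatrix, map_mul, LinearIsometryEquiv.coe_mul, Function.comp_apply,
    map_basis_eq_sum_repMatrix b hV h j]
  simp only [map_sum, map_smul, inner_sum, inner_smul_right]
  exact Finset.sum_congr rfl fun l _ => mul_comm _ _

theorem star_repMatrix (g : G) : star (repMatrix ρ b g) = repMatrix ρ b g⁻¹ := by
  ext k j
  rw [Matrix.star_apply, repMatrix, repMatrix, Complex.star_def, inner_conj_symm,
    ← (ρ g⁻¹).inner_map_map, map_inv_apply_map_apply]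

theorem repMatrix_mem_unitaryGroup (hV : IsInvariantSubspace ρ V) (g : G) :
    repMatrix ρ b g ∈ Matrix.unitaryGroup (Fin d) ℂ := by
  rw [Matrix.mem_unitaryGroup_iff', star_repMatrix, ← repMatrix_mul b hV, inv_mul_cancel,
    repMatrix_one]

def invariantURep (hV : IsInvariantSubspace ρ V) : URep G d where
  toFun g := ⟨repMatrix ρ b g, repMatrix_mem_unitaryGroup b hV g⟩
  map_one' := Subtype.ext (repMatrix_one b)
  map_mul' g h := Subtype.ext (repMatrix_mul b hV g h)

theorem coeff_invariantURep (hV : IsInvariantSubspace ρ V) (j k : Fin d) (g : G) :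
    coeff (invariantURep b hV) j k g = repMatrix ρ b g k j := rfl

theorem invariantURep_irreducible (hV : IsInvariantSubspace ρ V) (hd : 0 < d)
    (hmin : ∀ V' ≤ V, IsInvariantSubspace ρ V' → V' = ⊥ ∨ V' = V) :
    URepIrreducible (invariantURep b hV) := by
  refine ⟨hd, fun W hW => ?_⟩
  let synth : (Fin d → ℂ) →ₗ[ℂ] E := V.subtype ∘ₗ b.repr.symm.toLinearEquiv.toLinearMap ∘ₗ
      (WithLp.linearEquiv 2 ℂ (Fin d → ℂ)).symm.toLinearMap
  have hsynth (X : Fin d → ℂ) : synth X = ∑ j, X j • (b j : E) := by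
    simp [synth, ← b.sum_repr_symm]
  have hinj : Function.Injective synth :=
    V.injective_subtype.comp (b.repr.symm.injective.comp (WithLp.linearEquiv 2 ℂ _).symm.injective)
  have hrange : LinearMap.range synth = V := by
    simp [synth, LinearMap.range_comp]
  have hequiv (g : G) (X : Fin d → ℂ) :
      ρ g (synth X) = synth ((invariantURep b hV g : Matrix (Fin d) (Fin d) ℂ).mulVec X) := by
    simp only [hsynth, map_sum, map_smul, map_basis_eq_sum_repMatrix b hV, Finset.smul_sum,
      smul_smul, Matrix.mulVec, dotProduct, Finset.sum_smul]
    rw [Finset.sum_comm]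
    exact Finset.sum_congr rfl fun k _ => Finset.sum_congr rfl fun j _ => by rw [mul_comm]; rfl
  have hWinv : IsInvariantSubspace ρ (W.map synth) := by
    rintro g _ ⟨X, hX, rfl⟩
    exact ⟨_, hW g X hX, (hequiv g X).symm⟩
  rcases hmin _ (hrange ▸ LinearMap.map_le_range) hWinv with h | h
  · exact Or.inl (Submodule.map_injective_of_injective hinj
      (h.trans (Submodule.map_bot synth).symm))
  · exact Or.inr (Submodule.map_injective_of_injective hinj
      (h.trans (hrange.symm.trans (LinearMap.range_eq_map synth))))

theorem inner_map_mem_of_coeff_mem (hV : IsInvariantSubspace ρ V) {K : Submodule ℂ (G → ℂ)}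
    (hK : ∀ j k, coeff (invariantURep b hV) j k ∈ K) (u : E) {v : E} (hv : v ∈ V) :
    (fun g => inner ℂ u (ρ g v)) ∈ K := by
  have hexpand : (fun g => inner ℂ u (ρ g v)) = ∑ j, ∑ k,
      (inner ℂ (b j : E) v * inner ℂ u (b k : E)) • coeff (invariantURep b hV) j k := by
    funext g
    conv_lhs => rw [← b.sum_inner_smul_coe hv]
    simp only [map_sum, map_smul, map_basis_eq_sum_repMatrix b hV, inner_sum, inner_smul_right,
      Finset.sum_apply, Pi.smul_apply, coeff_invariantURep, smul_eq_mul, Finset.mul_sum]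
    exact Finset.sum_congr rfl fun j _ => Finset.sum_congr rfl fun k _ => by ring
  rw [hexpand]
  exact Submodule.sum_mem _ fun j _ => Submodule.sum_mem _ fun k _ =>
    Submodule.smul_mem _ _ (hK j k)

end InvariantSubspace

section CoefficientSpan

variable {G A : Type*} [Group G] {d : A → ℕ} (π : ∀ α, URep G (d α))

def coeffSpan : Submodule ℂ (G → ℂ) :=
  Submodule.span ℂ {f | ∃ α j i, coeff (π α) j i = f}

theorem coeff_mem_coeffSpan (α : A) (j i : Fin (d α)) : coeff (π α) j i ∈ coeffSpan π :=
  Submodule.subset_span ⟨α, j, i, rfl⟩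

theorem mul_rep_mul_apply_mem_coeffSpan {m n : Type*} [Fintype m] [Fintype n] (α : A)
    (P : Matrix m (Fin (d α)) ℂ) (Q : Matrix (Fin (d α)) n ℂ) (i : m) (j : n) :
    (fun g => (P * (π α g : Matrix (Fin (d α)) (Fin (d α)) ℂ) * Q) i j) ∈ coeffSpan π := by
  have hexpand : (fun g => (P * (π α g : Matrix (Fin (d α)) (Fin (d α)) ℂ) * Q) i j) =
      ∑ a, ∑ b, (P i a * Q b j) • coeff (π α) b a := by
    funext g
    simp only [Matrix.mul_apply, Finset.sum_mul, Finset.sum_apply, Pi.smul_apply, smul_eq_mul,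
      coeff]
    rw [Finset.sum_comm]
    exact Finset.sum_congr rfl fun a _ => Finset.sum_congr rfl fun b _ => by ring
  rw [hexpand]
  exact Submodule.sum_mem _ fun a _ => Submodule.sum_mem _ fun b _ =>
    Submodule.smul_mem _ _ (coeff_mem_coeffSpan π α b a)

variable {π}

theorem coeff_mem_coeffSpan_of_uEquiv {d' : ℕ} {σ : URep G d'} {α : A} (h : UEquiv σ (π α))
    (j i : Fin d') : coeff σ j i ∈ coeffSpan π := by
  obtain ⟨rfl, U, hU, hσ⟩ := h
  have hUinv : U⁻¹ = star U := Matrix.inv_eq_left_inv (Matrix.mem_unitaryGroup_iff'.1 hU)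
  have hconj (g : G) : (σ g : Matrix (Fin (d α)) (Fin (d α)) ℂ) =
      U * (π α g : Matrix (Fin (d α)) (Fin (d α)) ℂ) * U⁻¹ := by
    rw [← hσ g, finCongr_refl, Matrix.reindex_refl_refl, hUinv, ← mul_assoc, ← mul_assoc,
      Matrix.mem_unitaryGroup_iff.1 hU, one_mul, mul_assoc, Matrix.mem_unitaryGroup_iff.1 hU,
      mul_one]
  convert mul_rep_mul_apply_mem_coeffSpan π α U U⁻¹ i j using 1
  funext g
  rw [← hconj]
  rfl

theorem comp_mul_right_mem_coeffSpan {f : G → ℂ} (hf : f ∈ coeffSpan π) (g : G) :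
    (fun x => f (x * g)) ∈ coeffSpan π := by
  have hle : coeffSpan π ≤ (coeffSpan π).comap (LinearMap.funLeft ℂ ℂ (· * g)) := by
    refine Submodule.span_le.2 ?_
    rintro _ ⟨α, j, i, rfl⟩
    change (fun x => coeff (π α) j i (x * g)) ∈ coeffSpan π
    convert mul_rep_mul_apply_mem_coeffSpan π α 1 (π α g : Matrix _ _ ℂ) i j using 1
    funext x
    simp [coeff]
  exact hle hf

end CoefficientSpan

section RightRegular

variable {G : Type*} [Group G] [Fintype G]

def rightRegular : G →* (EuclideanSpace ℂ G ≃ₗᵢ[ℂ] EuclideanSpace ℂ G) where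
  toFun g := LinearIsometryEquiv.piLpCongrLeft 2 ℂ ℂ (Equiv.mulRight g).symm
  map_one' := by ext; simp
  map_mul' g h := by ext; simp [mul_assoc]

theorem rightRegular_apply (g : G) (f : EuclideanSpace ℂ G) (x : G) :
    rightRegular g f x = f (x * g) := by
  simp [rightRegular]

variable {A : Type*} {d : A → ℕ} {π : ∀ α, URep G (d α)}

theorem rightRegular_isInvariantSubspace_coeffSpan :
    IsInvariantSubspace rightRegular
      ((coeffSpan π).comap (WithLp.linearEquiv 2 ℂ (G → ℂ)).toLinearMap) := fun g v hv => by
  rw [Submodule.mem_comap]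
  convert comp_mul_right_mem_coeffSpan hv g using 1
  funext x
  exact rightRegular_apply g v x

theorem le_coeffSpan_of_minimal
    (hcomplete : ∀ (d' : ℕ) (σ : URep G d'), URepIrreducible σ → ∃ α, UEquiv σ (π α))
    {V : Submodule ℂ (EuclideanSpace ℂ G)} (hV : IsInvariantSubspace rightRegular V)
    (hVne : V ≠ ⊥) (hmin : ∀ V' ≤ V, IsInvariantSubspace rightRegular V' → V' = ⊥ ∨ V' = V) :
    V ≤ (coeffSpan π).comap (WithLp.linearEquiv 2 ℂ (G → ℂ)).toLinearMap := by
  classical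
  let b := stdOrthonormalBasis ℂ V
  obtain ⟨α, hα⟩ := hcomplete _ (invariantURep b hV) (invariantURep_irreducible b hV
    (Nat.pos_of_ne_zero fun h => hVne (Submodule.finrank_eq_zero.1 h)) hmin)
  intro v hv
  rw [Submodule.mem_comap]
  convert inner_map_mem_of_coeff_mem b hV (coeff_mem_coeffSpan_of_uEquiv hα)
    (EuclideanSpace.single 1 1) hv using 1
  funext g
  simp [EuclideanSpace.inner_single_left, rightRegular_apply]

variable (π) in
theorem coeffSpan_eq_top
    (hcomplete : ∀ (d' : ℕ) (σ : URep G d'), URepIrreducible σ → ∃ α, UEquiv σ (π α)) :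
    coeffSpan π = ⊤ := by
  let C : Submodule ℂ (EuclideanSpace ℂ G) :=
    (coeffSpan π).comap (WithLp.linearEquiv 2 ℂ (G → ℂ)).toLinearMap
  suffices hCperp : Cᗮ = ⊥ by
    rw [Submodule.orthogonal_eq_bot_iff] at hCperp
    refine eq_top_iff.2 fun f _ => ?_
    have hf : WithLp.toLp 2 f ∈ C := by
      rw [hCperp]
      exact Submodule.mem_top
    exact hf
  by_contra hne
  obtain ⟨V, ⟨hVC, hV, hVne⟩, hVmin⟩ := wellFounded_lt.has_min
    {V | V ≤ Cᗮ ∧ IsInvariantSubspace (rightRegular (G := G)) V ∧ V ≠ ⊥}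
    ⟨Cᗮ, le_rfl, rightRegular_isInvariantSubspace_coeffSpan.orthogonal, hne⟩
  have hmin (V' : Submodule ℂ (EuclideanSpace ℂ G)) (hle : V' ≤ V)
      (hV' : IsInvariantSubspace rightRegular V') : V' = ⊥ ∨ V' = V :=
    or_iff_not_imp_left.2 fun hbot =>
      hle.lt_or_eq.resolve_left (hVmin V' ⟨hle.trans hVC, hV', hbot⟩)
  have hVC' : V ≤ C := le_coeffSpan_of_minimal hcomplete hV hVne hmin
  exact hVne (eq_bot_iff.2 fun v hv => (Submodule.inf_orthogonal_eq_bot C).le ⟨hVC' hv, hVC hv⟩)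

end RightRegular

theorem stmt14_general {n : ℕ} (S : Finset (Equiv.Perm (Fin n)))
    (hS : ∀ s ∈ S, s⁻¹ ∈ S) {A : Type*} [Fintype A] {d : A → ℕ}
    (π : ∀ α : A, URep (Equiv.Perm (Fin n)) (d α))
    (hcomplete : ∀ (d' : ℕ) (σ : URep (Equiv.Perm (Fin n)) d'),
        URepIrreducible σ → ∃ α, UEquiv σ (π α))
    (Λ : A → Finset ℝ) (hΛ : ∀ α (lam : ℝ), lam ∈ Λ α ↔ IsEigval (repSum (π α) S) lam)
    {ι : (α : A) → Fin (d α) → ℝ → Type*} [∀ α i lam, Fintype (ι α i lam)]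
    (F : (α : A) → (i : Fin (d α)) → (lam : ℝ) → ι α i lam → (Fin (d α) → ℂ))
    (hF : ∀ α (i : Fin (d α)) (lam : ℝ), lam ∈ Λ α →
        IsFrameIn (F α i lam) {X | IsEigvec (repSum (π α) S) lam X}) :
    IsFrameIn
      (fun p : Σ α : A, Σ i : Fin (d α), Σ lam : (Λ α), ι α i (lam : ℝ) =>
        ThetaT n (π p.1) p.2.1 (F p.1 p.2.1 (p.2.2.1 : ℝ) p.2.2.2))
      (Set.univ) ∧
    ∀ p : Σ α : A, Σ i : Fin (d α), Σ lam : (Λ α), ι α i (lam : ℝ),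
      ThetaT n (π p.1) p.2.1 (F p.1 p.2.1 (p.2.2.1 : ℝ) p.2.2.2) ∈
        Zset (π p.1) p.2.1 (p.2.2.1 : ℝ) S := by
  have hscale (α : A) (i : Fin (d α)) (X : Fin (d α) → ℂ) :
      ThetaT n (π α) i X = (Real.sqrt (d α / n.factorial) : ℂ) • Theta (π α) i X := rfl
  refine ⟨isFrameIn_univ_of_span_eq_top ?_, ?_⟩
  · rw [eq_top_iff, ← coeffSpan_eq_top π hcomplete, coeffSpan, Submodule.span_le]
    rintro _ ⟨α, p, q, rfl⟩
    refine coeff_mem_of_Theta_mem (π α) q (span_frames_eq_top (repSum_isHermitian (π α) hS)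
      (fun lam => (hΛ α lam).2) (hF α q)) ?_ p
    simp only [mem_iUnion, mem_range]
    rintro _ ⟨lam, hlam, t, rfl⟩
    have hc : (Real.sqrt (d α / n.factorial) : ℂ) ≠ 0 := by
      have hd : 0 < d α := q.pos
      exact Complex.ofReal_ne_zero.2 (Real.sqrt_ne_zero'.2 (by positivity))
    rw [← Submodule.smul_mem_iff _ hc, ← hscale]
    exact Submodule.subset_span ⟨⟨α, q, ⟨lam, hlam⟩, t⟩, rfl⟩
  · rintro ⟨α, i, ⟨lam, hlam⟩, t⟩
    obtain ⟨-, -, -, -, hmem, -⟩ := hF α i lam hlam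
    exact ⟨_, (hmem t).smul _, by rw [hscale, Theta_smul]⟩

/-- Given a complete list `(π^α)` of pairwise inequivalent irreducible unitary
representations of `𝕊_n` and, for each `α`, `i` and eigenvalue `λ` of `π^α(S)`, a frame
`F^{α,λ}_i` for `E_λ(π^α(S))`, the collection `Φ = {Θ̃_{π^α,i,λ}(ψ)}` is a frame for
`L²(𝕊_n)` and every element of `Φ` belongs to some `Z_{π^α,i,λ}`. -/
theorem stmt14 {n : ℕ} (hn : 1 ≤ n) (S : Finset (Equiv.Perm (Fin n)))
    (hS : ∀ s ∈ S, s⁻¹ ∈ S) {A : Type*} [Fintype A] {d : A → ℕ}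
    (π : ∀ α : A, URep (Equiv.Perm (Fin n)) (d α))
    (hirr : ∀ α, URepIrreducible (π α))
    (hpair : ∀ α β, α ≠ β → ¬ UEquiv (π α) (π β))
    (hcomplete : ∀ (d' : ℕ) (σ : URep (Equiv.Perm (Fin n)) d'),
        URepIrreducible σ → ∃ α, UEquiv σ (π α))
    (Λ : A → Finset ℝ) (hΛ : ∀ α (lam : ℝ), lam ∈ Λ α ↔ IsEigval (repSum (π α) S) lam)
    {ι : (α : A) → Fin (d α) → ℝ → Type*} [∀ α i lam, Fintype (ι α i lam)]
    (F : (α : A) → (i : Fin (d α)) → (lam : ℝ) → ι α i lam → (Fin (d α) → ℂ))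
    (hF : ∀ α (i : Fin (d α)) (lam : ℝ), lam ∈ Λ α →
        IsFrameIn (F α i lam) {X | IsEigvec (repSum (π α) S) lam X}) :
    IsFrameIn
      (fun p : Σ α : A, Σ i : Fin (d α), Σ lam : (Λ α), ι α i (lam : ℝ) =>
        ThetaT n (π p.1) p.2.1 (F p.1 p.2.1 (p.2.2.1 : ℝ) p.2.2.2))
      (Set.univ) ∧
    ∀ p : Σ α : A, Σ i : Fin (d α), Σ lam : (Λ α), ι α i (lam : ℝ),
      ThetaT n (π p.1) p.2.1 (F p.1 p.2.1 (p.2.2.1 : ℝ) p.2.2.2) ∈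
        Zset (π p.1) p.2.1 (p.2.2.1 : ℝ) S :=
  stmt14_general S hS π hcomplete Λ hΛ F hF
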